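/- There exists a constant C > 0 (depending on P₀ and P₁) such that for every ε ∈ (0,1), the adiabatic time satisfies t_ad(P₀, P₁, ε) ≤ C · t_mix(P₁, ε/2)² / ε. -/

import Mathlib

open Matrix BigOperators

/-- A row-stochastic matrix: nonnegative entries, each row sums to 1. -/
def IsStochastic {n : ℕ} (P : Matrix (Fin n) (Fin n) ℝ) : Prop :=
  (∀ i j, 0 ≤ P i j) ∧ ∀ i, ∑ j, P i j = 1

/-- Irreducibility: every state can reach every other state. -/
def MCIrreducible {n : ℕ} (P : Matrix (Fin n) (Fin n) ℝ) : Prop :=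
  ∀ i j, ∃ m : ℕ, 0 < (P ^ m) i j

/-- Aperiodicity (for a finite chain): every state has eventually positive return
probabilities. -/
def MCAperiodic {n : ℕ} (P : Matrix (Fin n) (Fin n) ℝ) : Prop :=
  ∀ i : Fin n, ∃ N : ℕ, ∀ m : ℕ, N ≤ m → 0 < (P ^ m) i i

/-- A probability (row) vector. -/
def IsProbVec {n : ℕ} (v : Fin n → ℝ) : Prop :=
  (∀ i, 0 ≤ v i) ∧ ∑ i, v i = 1

/-- Total variation distance between two vectors. -/
noncomputable def tvDist {n : ℕ} (μ ν : Fin n → ℝ) : ℝ :=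
  (1 / 2) * ∑ i, |μ i - ν i|

/-- Euclidean norm on ℝⁿ. -/
noncomputable def euclNorm {n : ℕ} (v : Fin n → ℝ) : ℝ :=
  Real.sqrt (∑ i, (v i) ^ 2)

/-- Mixing time of `P` with stationary distribution `π`. -/
noncomputable def mixingTime {n : ℕ} (P : Matrix (Fin n) (Fin n) ℝ)
    (π : Fin n → ℝ) (ε : ℝ) : ℕ :=
  sInf {T : ℕ | ∀ ν : Fin n → ℝ, IsProbVec ν → tvDist (ν ᵥ* (P ^ T)) π ≤ ε}

/-- The interpolation `P_t = (1-t)·P₀ + t·P₁`. -/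
noncomputable def Pt {n : ℕ} (P₀ P₁ : Matrix (Fin n) (Fin n) ℝ) (t : ℝ) :
    Matrix (Fin n) (Fin n) ℝ :=
  (1 - t) • P₀ + t • P₁

/-- The ordered product `P_{(j+1)/T} P_{(j+2)/T} ⋯ P_{k/T}` (identity if `j ≥ k`). -/
noncomputable def prodSeg {n : ℕ} (P₀ P₁ : Matrix (Fin n) (Fin n) ℝ) (T j k : ℕ) :
    Matrix (Fin n) (Fin n) ℝ :=
  ((List.range (k - j)).map (fun i => Pt P₀ P₁ (((j : ℝ) + (i : ℝ) + 1) / (T : ℝ)))).prod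

/-- The ordered product `P_{1/T} P_{2/T} ⋯ P_{k/T}`. -/
noncomputable def adiabProd {n : ℕ} (P₀ P₁ : Matrix (Fin n) (Fin n) ℝ) (T k : ℕ) :
    Matrix (Fin n) (Fin n) ℝ :=
  prodSeg P₀ P₁ T 0 k

/-- Adiabatic time of the adiabatic evolution between `P₀` and `P₁`,
with `π₁` the stationary distribution of `P₁`. -/
noncomputable def adiabaticTime {n : ℕ} (P₀ P₁ : Matrix (Fin n) (Fin n) ℝ)
    (π₁ : Fin n → ℝ) (ε : ℝ) : ℕ :=
  sInf {T' : ℕ | ∀ T : ℕ, T' ≤ T → ∀ ν : Fin n → ℝ, IsProbVec ν →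
    tvDist ((ν ᵥ* P₀) ᵥ* adiabProd P₀ P₁ T T) π₁ ≤ ε}

/-- Stable adiabatic time, where `π s` is the stationary distribution of `P_s`. -/
noncomputable def stableAdiabaticTime {n : ℕ} (P₀ P₁ : Matrix (Fin n) (Fin n) ℝ)
    (π : ℝ → Fin n → ℝ) (ε : ℝ) : ℕ :=
  sInf {T : ℕ | ∀ k : ℕ, 1 ≤ k → k ≤ T →
    tvDist ((π 0) ᵥ* adiabProd P₀ P₁ T k) (π ((k : ℝ) / (T : ℝ))) < ε}

/-- `t_mix(ε) = sup_{s ∈ [0,1]} t_mix(P_s, ε)`, where `π s` is the stationary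
distribution of `P_s`. -/
noncomputable def maxMixingTime {n : ℕ} (P₀ P₁ : Matrix (Fin n) (Fin n) ℝ)
    (π : ℝ → Fin n → ℝ) (ε : ℝ) : ℕ :=
  sSup {m : ℕ | ∃ s ∈ Set.Icc (0 : ℝ) 1, m = mixingTime (Pt P₀ P₁ s) (π s) ε}

/-- `s` is a singular value of `A`: `s ≥ 0` and `s²` is an eigenvalue of `A Aᵀ`
(for a left eigenvector). -/
def IsSingularValue {n : ℕ} (A : Matrix (Fin n) (Fin n) ℝ) (s : ℝ) : Prop :=
  0 ≤ s ∧ ∃ v : Fin n → ℝ, v ≠ 0 ∧ v ᵥ* (A * Aᵀ) = (s ^ 2) • v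

/-- `σ` is the smallest nonzero (positive) singular value of `A`. -/
def IsSmallestPosSingularValue {n : ℕ} (A : Matrix (Fin n) (Fin n) ℝ) (σ : ℝ) : Prop :=
  0 < σ ∧ IsSingularValue A σ ∧ ∀ s : ℝ, 0 < s → IsSingularValue A s → σ ≤ s

/-!
Split the adiabatic product `P_{1/T} ⋯ P_{T/T}` before its last `m = t_mix(P₁, ε/2)` factors.
Whatever the start, the first block produces some probability vector `μ`. Each of the last `m`
factors is `P_s` with `1 - s ≤ m/T`, and `‖μ P_s - μ P₁‖_TV = (1 - s) ‖μ P₀ - μ P₁‖_TV ≤ m/T`;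
since stochastic matrices contract total variation, replacing the factors by `P₁` one at a time
moves the result by at most `m²/T`, and `μ P₁^m` is `ε/2`-close to `π₁`. So every `T` with
`m² ≤ ε T / 2` works, e.g. `T = 2 m² ⌈1/ε⌉ ≤ 4 m²/ε`. That `t_mix(P₁, ε/2)` is attained at all is
the convergence theorem, proved by a Doeblin contraction for a power of `P₁` with positive entries.
-/

section Stochastic

variable {n : ℕ}

theorem isStochastic_iff_mem_rowStochastic {P : Matrix (Fin n) (Fin n) ℝ} :
    IsStochastic P ↔ P ∈ rowStochastic ℝ (Fin n) :=
  mem_rowStochastic_iff_sum.symm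

theorem IsProbVec.vecMul {v : Fin n → ℝ} {A : Matrix (Fin n) (Fin n) ℝ} (hv : IsProbVec v)
    (hA : A ∈ rowStochastic ℝ (Fin n)) : IsProbVec (v ᵥ* A) := by
  refine ⟨nonneg_vecMul_of_mem_rowStochastic hA hv.1, ?_⟩
  rw [← dotProduct_one]
  exact vecMul_dotProduct_one_eq_one_rowStochastic hA (by rw [dotProduct_one, hv.2])

theorem IsProbVec.nonempty {v : Fin n → ℝ} (hv : IsProbVec v) : Nonempty (Fin n) := by
  by_contra h
  rw [not_nonempty_iff] at h
  simpa using hv.2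

theorem Pt_mem_rowStochastic {P₀ P₁ : Matrix (Fin n) (Fin n) ℝ}
    (hP₀ : P₀ ∈ rowStochastic ℝ (Fin n)) (hP₁ : P₁ ∈ rowStochastic ℝ (Fin n)) {t : ℝ}
    (ht₀ : 0 ≤ t) (ht₁ : t ≤ 1) : Pt P₀ P₁ t ∈ rowStochastic ℝ (Fin n) :=
  convex_rowStochastic hP₀ hP₁ (sub_nonneg.2 ht₁) ht₀ (sub_add_cancel 1 t)

end Stochastic

section TotalVariation

variable {n : ℕ}

theorem tvDist_self (μ : Fin n → ℝ) : tvDist μ μ = 0 := by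
  simp [tvDist]

theorem tvDist_triangle (μ ν ρ : Fin n → ℝ) : tvDist μ ρ ≤ tvDist μ ν + tvDist ν ρ := by
  unfold tvDist
  rw [← mul_add, ← Finset.sum_add_distrib]
  gcongr with i
  exact abs_sub_le _ _ _

theorem tvDist_le_one {μ ν : Fin n → ℝ} (hμ : IsProbVec μ) (hν : IsProbVec ν) :
    tvDist μ ν ≤ 1 := by
  have h : ∑ i, |μ i - ν i| ≤ ∑ i, (μ i + ν i) := Finset.sum_le_sum fun i _ => by
    simpa only [abs_of_nonneg (hμ.1 i), abs_of_nonneg (hν.1 i)] using abs_sub (μ i) (ν i)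
  rw [Finset.sum_add_distrib, hμ.2, hν.2] at h
  unfold tvDist
  linarith

theorem sum_abs_vecMul_le {x : Fin n → ℝ} {A : Matrix (Fin n) (Fin n) ℝ} {c : ℝ}
    (hA : ∀ i j, 0 ≤ A i j) (hc : ∀ i, ∑ j, A i j = c) :
    ∑ j, |(x ᵥ* A) j| ≤ c * ∑ i, |x i| := by
  calc ∑ j, |(x ᵥ* A) j| ≤ ∑ j, ∑ i, |x i| * A i j := Finset.sum_le_sum fun j _ => by
        refine (Finset.abs_sum_le_sum_abs (fun i => x i * A i j) Finset.univ).trans_eq ?_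
        simp only [abs_mul, abs_of_nonneg (hA _ j)]
    _ = ∑ i, |x i| * ∑ j, A i j := by
        rw [Finset.sum_comm]
        simp only [Finset.mul_sum]
    _ = c * ∑ i, |x i| := by
        rw [Finset.mul_sum]
        simp only [hc, mul_comm]

theorem tvDist_vecMul_le {μ ν : Fin n → ℝ} {A : Matrix (Fin n) (Fin n) ℝ}
    (hA : A ∈ rowStochastic ℝ (Fin n)) : tvDist (μ ᵥ* A) (ν ᵥ* A) ≤ tvDist μ ν := by
  have h := sum_abs_vecMul_le (x := μ - ν) hA.1 (sum_row_of_mem_rowStochastic hA)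
  simp only [sub_vecMul, one_mul, Pi.sub_apply] at h
  unfold tvDist
  gcongr

end TotalVariation

section Convergence

variable {n : ℕ}

/-- Doeblin's contraction: subtracting the constant `δ` from every entry of `Q` does not change
`(μ - ν) Q`, since `μ - ν` sums to zero, and leaves a nonnegative matrix with row sums `1 - nδ`. -/
theorem tvDist_vecMul_le_of_le_apply {Q : Matrix (Fin n) (Fin n) ℝ}
    (hQ : Q ∈ rowStochastic ℝ (Fin n)) {δ : ℝ} (hδ : ∀ i j, δ ≤ Q i j) {μ ν : Fin n → ℝ}
    (hμ : IsProbVec μ) (hν : IsProbVec ν) :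
    tvDist (μ ᵥ* Q) (ν ᵥ* Q) ≤ (1 - n * δ) * tvDist μ ν := by
  set R : Matrix (Fin n) (Fin n) ℝ := Q - of fun _ _ => δ
  have hR : ∀ i, ∑ j, R i j = 1 - n * δ := fun i => by
    simp [R, Finset.sum_sub_distrib, sum_row_of_mem_rowStochastic hQ i]
  have hdiff : (μ - ν) ᵥ* R = (μ - ν) ᵥ* Q := by
    rw [vecMul_sub, sub_eq_self]
    ext j
    simp [vecMul, dotProduct, ← Finset.sum_mul, hμ.2, hν.2]
  have h := sum_abs_vecMul_le (x := μ - ν) (A := R) (fun i j => sub_nonneg.2 (hδ i j)) hR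
  rw [hdiff, sub_vecMul] at h
  unfold tvDist
  simp only [Pi.sub_apply] at h
  nlinarith

theorem vecMul_pow_eq_self {P : Matrix (Fin n) (Fin n) ℝ} {π : Fin n → ℝ} (h : π ᵥ* P = π)
    (k : ℕ) : π ᵥ* P ^ k = π := by
  induction k with
  | zero => simp
  | succ k ih => rw [pow_succ, ← vecMul_vecMul, ih, h]

theorem tvDist_vecMul_pow_le {Q : Matrix (Fin n) (Fin n) ℝ} (hQ : Q ∈ rowStochastic ℝ (Fin n))
    {r : ℝ} (hr : 0 ≤ r)
    (hcontr : ∀ μ ν, IsProbVec μ → IsProbVec ν → tvDist (μ ᵥ* Q) (ν ᵥ* Q) ≤ r * tvDist μ ν)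
    {π : Fin n → ℝ} (hπ : IsProbVec π) (hstat : π ᵥ* Q = π) {ν : Fin n → ℝ} (hν : IsProbVec ν)
    (k : ℕ) : tvDist (ν ᵥ* Q ^ k) π ≤ r ^ k := by
  induction k with
  | zero => simpa using tvDist_le_one hν hπ
  | succ k ih =>
    calc tvDist (ν ᵥ* Q ^ (k + 1)) π = tvDist ((ν ᵥ* Q ^ k) ᵥ* Q) (π ᵥ* Q) := by
          rw [pow_succ, ← vecMul_vecMul, hstat]
      _ ≤ r * tvDist (ν ᵥ* Q ^ k) π := hcontr _ _ (hν.vecMul (pow_mem hQ k)) hπ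
      _ ≤ r ^ (k + 1) := by rw [pow_succ']; gcongr

theorem exists_pow_apply_pos {P : Matrix (Fin n) (Fin n) ℝ} (hP : P ∈ rowStochastic ℝ (Fin n))
    (hPi : MCIrreducible P) (hPa : MCAperiodic P) : ∃ M : ℕ, ∀ i j, 0 < (P ^ M) i j := by
  choose m hm using hPi
  choose N hN using hPa
  refine ⟨Finset.univ.sup fun p : Fin n × Fin n => N p.1 + m p.1 p.2, fun i j => ?_⟩
  set M := Finset.univ.sup fun p : Fin n × Fin n => N p.1 + m p.1 p.2
  have hle : N i + m i j ≤ M :=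
    Finset.le_sup (f := fun p => N p.1 + m p.1 p.2) (Finset.mem_univ (i, j))
  have hM : P ^ M = P ^ (M - m i j) * P ^ m i j := by
    rw [← pow_add, Nat.sub_add_cancel (by omega)]
  rw [hM, mul_apply]
  have hterm_nonneg : ∀ k, 0 ≤ (P ^ (M - m i j)) i k * (P ^ m i j) k j := fun k =>
    mul_nonneg (nonneg_of_mem_rowStochastic (pow_mem hP _))
      (nonneg_of_mem_rowStochastic (pow_mem hP _))
  exact (mul_pos (hN i _ (by omega)) (hm i j)).trans_le
    (Finset.single_le_sum (fun k _ => hterm_nonneg k) (Finset.mem_univ i))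

theorem exists_tvDist_vecMul_pow_le {P : Matrix (Fin n) (Fin n) ℝ}
    (hP : P ∈ rowStochastic ℝ (Fin n)) (hPi : MCIrreducible P) (hPa : MCAperiodic P)
    {π : Fin n → ℝ} (hπ : IsProbVec π) (hstat : π ᵥ* P = π) {ε : ℝ} (hε : 0 < ε) :
    ∃ T : ℕ, ∀ ν, IsProbVec ν → tvDist (ν ᵥ* P ^ T) π ≤ ε := by
  obtain ⟨M, hM⟩ := exists_pow_apply_pos hP hPi hPa
  have := hπ.nonempty
  obtain ⟨⟨i₀, j₀⟩, hmin⟩ := Finite.exists_min fun p : Fin n × Fin n => (P ^ M) p.1 p.2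
  set δ := (P ^ M) i₀ j₀
  have hδ : ∀ i j, δ ≤ (P ^ M) i j := fun i j => hmin (i, j)
  have hnδ : n * δ ≤ 1 := by
    calc n * δ = ∑ _j : Fin n, δ := by simp
      _ ≤ ∑ j, (P ^ M) i₀ j := Finset.sum_le_sum fun j _ => hδ i₀ j
      _ = 1 := sum_row_of_mem_rowStochastic (pow_mem hP M) i₀
  have hn : (0 : ℝ) < n := by exact_mod_cast Fin.pos i₀
  obtain ⟨k, hk⟩ := exists_pow_lt_of_lt_one hε
    (show 1 - n * δ < 1 by nlinarith [hM i₀ j₀])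
  refine ⟨M * k, fun ν hν => ?_⟩
  rw [pow_mul]
  refine (tvDist_vecMul_pow_le (pow_mem hP M) (sub_nonneg.2 hnδ)
    (fun μ ν hμ hν => tvDist_vecMul_le_of_le_apply (pow_mem hP M) hδ hμ hν) hπ
    (vecMul_pow_eq_self hstat M) hν k).trans hk.le

theorem tvDist_vecMul_pow_mixingTime_le {P : Matrix (Fin n) (Fin n) ℝ}
    (hP : P ∈ rowStochastic ℝ (Fin n)) (hPi : MCIrreducible P) (hPa : MCAperiodic P)
    {π : Fin n → ℝ} (hπ : IsProbVec π) (hstat : π ᵥ* P = π) {ε : ℝ} (hε : 0 < ε) {ν : Fin n → ℝ}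
    (hν : IsProbVec ν) : tvDist (ν ᵥ* P ^ mixingTime P π ε) π ≤ ε :=
  Nat.sInf_mem (exists_tvDist_vecMul_pow_le hP hPi hPa hπ hstat hε) ν hν

end Convergence

section AdiabaticProduct

variable {n : ℕ} {P₀ P₁ : Matrix (Fin n) (Fin n) ℝ}

theorem tvDist_vecMul_Pt_le (hP₀ : P₀ ∈ rowStochastic ℝ (Fin n))
    (hP₁ : P₁ ∈ rowStochastic ℝ (Fin n)) {μ : Fin n → ℝ} (hμ : IsProbVec μ) {t : ℝ}
    (ht : t ≤ 1) : tvDist (μ ᵥ* Pt P₀ P₁ t) (μ ᵥ* P₁) ≤ 1 - t := by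
  have h : tvDist (μ ᵥ* Pt P₀ P₁ t) (μ ᵥ* P₁) = (1 - t) * tvDist (μ ᵥ* P₀) (μ ᵥ* P₁) := by
    have hcoord : ∀ j, (μ ᵥ* Pt P₀ P₁ t) j - (μ ᵥ* P₁) j
        = (1 - t) * ((μ ᵥ* P₀) j - (μ ᵥ* P₁) j) := fun j => by
      simp only [Pt, vecMul_add, vecMul_smul, Pi.add_apply, Pi.smul_apply, smul_eq_mul]
      ring
    simp only [tvDist, hcoord, abs_mul, abs_of_nonneg (sub_nonneg.2 ht), ← Finset.mul_sum]
    ring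
  rw [h]
  exact mul_le_of_le_one_right (sub_nonneg.2 ht) (tvDist_le_one (hμ.vecMul hP₀) (hμ.vecMul hP₁))

/-- Hybrid argument: replace the factors of `l` by `B` one at a time. -/
theorem tvDist_vecMul_list_prod_le {B : Matrix (Fin n) (Fin n) ℝ}
    (hB : B ∈ rowStochastic ℝ (Fin n)) {c : ℝ} {l : List (Matrix (Fin n) (Fin n) ℝ)}
    (hl : ∀ A ∈ l, A ∈ rowStochastic ℝ (Fin n) ∧
      ∀ μ, IsProbVec μ → tvDist (μ ᵥ* A) (μ ᵥ* B) ≤ c)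
    {μ : Fin n → ℝ} (hμ : IsProbVec μ) :
    tvDist (μ ᵥ* l.prod) (μ ᵥ* B ^ l.length) ≤ l.length * c := by
  induction l generalizing μ with
  | nil => simp [tvDist_self]
  | cons A l ih =>
    obtain ⟨hA, hAB⟩ := hl A List.mem_cons_self
    have hl' : ∀ A ∈ l, _ := fun A' hA' => hl A' (List.mem_cons_of_mem A hA')
    have hprod : l.prod ∈ rowStochastic ℝ (Fin n) :=
      Submonoid.list_prod_mem _ fun A' hA' => (hl' A' hA').1
    calc tvDist (μ ᵥ* (A :: l).prod) (μ ᵥ* B ^ (A :: l).length)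
        ≤ tvDist ((μ ᵥ* A) ᵥ* l.prod) ((μ ᵥ* B) ᵥ* l.prod)
          + tvDist ((μ ᵥ* B) ᵥ* l.prod) ((μ ᵥ* B) ᵥ* B ^ l.length) := by
          simp only [List.prod_cons, List.length_cons, pow_succ', vecMul_vecMul]
          exact tvDist_triangle _ _ _
      _ ≤ c + l.length * c := add_le_add ((tvDist_vecMul_le hprod).trans (hAB μ hμ))
          (ih hl' (hμ.vecMul hB))
      _ = (A :: l).length * c := by simp only [List.length_cons]; push_cast; ring

/-- `prodSeg` elaborates its index list as `List.range (k - j)` pushed into `List ℝ` through the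
list monad; this restates it with natural indices. -/
theorem prodSeg_eq_prod_map_range (T j k : ℕ) :
    prodSeg P₀ P₁ T j k
      = ((List.range (k - j)).map fun i : ℕ => Pt P₀ P₁ ((j + i + 1 : ℝ) / T)).prod := by
  simp only [prodSeg, bind_pure_comp, List.map_eq_map, List.map_map]
  rfl

theorem prodSeg_mul_prodSeg (T : ℕ) {j k l : ℕ} (hjk : j ≤ k) (hkl : k ≤ l) :
    prodSeg P₀ P₁ T j k * prodSeg P₀ P₁ T k l = prodSeg P₀ P₁ T j l := by
  simp only [prodSeg_eq_prod_map_range]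
  rw [show l - j = (k - j) + (l - k) by omega, List.range_add, List.map_append, List.prod_append,
    List.map_map]
  congr 3 with i
  simp only [Function.comp_apply]
  push_cast [hjk]
  ring_nf

theorem prodSeg_mem_rowStochastic (hP₀ : P₀ ∈ rowStochastic ℝ (Fin n))
    (hP₁ : P₁ ∈ rowStochastic ℝ (Fin n)) {T j k : ℕ} (hkT : k ≤ T) :
    prodSeg P₀ P₁ T j k ∈ rowStochastic ℝ (Fin n) := by
  rw [prodSeg_eq_prod_map_range]
  refine Submonoid.list_prod_mem _ fun A hA => ?_
  obtain ⟨i, hi, rfl⟩ := List.mem_map.1 hA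
  have hi : (j + i + 1 : ℝ) ≤ T := by exact_mod_cast (by grind : j + i + 1 ≤ T)
  exact Pt_mem_rowStochastic hP₀ hP₁ (by positivity) (div_le_one_of_le₀ hi (Nat.cast_nonneg T))

theorem tvDist_vecMul_prodSeg_le (hP₀ : P₀ ∈ rowStochastic ℝ (Fin n))
    (hP₁ : P₁ ∈ rowStochastic ℝ (Fin n)) {T j k : ℕ} (hkT : k ≤ T) {μ : Fin n → ℝ}
    (hμ : IsProbVec μ) :
    tvDist (μ ᵥ* prodSeg P₀ P₁ T j k) (μ ᵥ* P₁ ^ (k - j)) ≤ (k - j : ℕ) * ((T - j) / T : ℝ) := by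
  have h := tvDist_vecMul_list_prod_le hP₁ (c := (T - j) / T)
    (l := (List.range (k - j)).map fun i : ℕ => Pt P₀ P₁ ((j + i + 1 : ℝ) / T)) ?_ hμ
  · simpa only [List.length_map, List.length_range, ← prodSeg_eq_prod_map_range] using h
  intro A hA
  obtain ⟨i, hi, rfl⟩ := List.mem_map.1 hA
  have hiT : j + i + 1 ≤ T := by grind
  have hT : (0 : ℝ) < T := by exact_mod_cast (by omega : 0 < T)
  have ht : (j + i + 1 : ℝ) / T ≤ 1 := div_le_one_of_le₀ (by exact_mod_cast hiT) hT.le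
  refine ⟨Pt_mem_rowStochastic hP₀ hP₁ (by positivity) ht,
    fun ν hν => (tvDist_vecMul_Pt_le hP₀ hP₁ hν ht).trans ?_⟩
  rw [sub_div, div_self hT.ne']
  gcongr
  linarith

theorem tvDist_vecMul_adiabProd_le (hP₀ : P₀ ∈ rowStochastic ℝ (Fin n))
    (hP₁ : P₁ ∈ rowStochastic ℝ (Fin n)) {π : Fin n → ℝ} {m : ℕ} {η : ℝ}
    (hmix : ∀ ν, IsProbVec ν → tvDist (ν ᵥ* P₁ ^ m) π ≤ η) {T : ℕ} (hmT : m ≤ T)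
    {μ : Fin n → ℝ} (hμ : IsProbVec μ) :
    tvDist (μ ᵥ* adiabProd P₀ P₁ T T) π ≤ m * (m / T) + η := by
  set μ' := μ ᵥ* prodSeg P₀ P₁ T 0 (T - m)
  have hμ' : IsProbVec μ' := hμ.vecMul (prodSeg_mem_rowStochastic hP₀ hP₁ (Nat.sub_le T m))
  have hlast := tvDist_vecMul_prodSeg_le hP₀ hP₁ (T := T) (j := T - m) le_rfl hμ'
  rw [Nat.sub_sub_self hmT, Nat.cast_sub hmT, sub_sub_cancel] at hlast
  calc tvDist (μ ᵥ* adiabProd P₀ P₁ T T) π = tvDist (μ' ᵥ* prodSeg P₀ P₁ T (T - m) T) π := by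
        rw [adiabProd, ← prodSeg_mul_prodSeg T (Nat.zero_le _) (Nat.sub_le T m), vecMul_vecMul]
    _ ≤ tvDist (μ' ᵥ* prodSeg P₀ P₁ T (T - m) T) (μ' ᵥ* P₁ ^ m) + tvDist (μ' ᵥ* P₁ ^ m) π :=
        tvDist_triangle _ _ _
    _ ≤ m * (m / T) + η := add_le_add hlast (hmix μ' hμ')

theorem adiabaticTime_le (hP₀ : P₀ ∈ rowStochastic ℝ (Fin n))
    (hP₁ : P₁ ∈ rowStochastic ℝ (Fin n)) {π : Fin n → ℝ} {m : ℕ} {ε : ℝ} (hε : 0 ≤ ε)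
    (hmix : ∀ ν, IsProbVec ν → tvDist (ν ᵥ* P₁ ^ m) π ≤ ε / 2) {T₀ : ℕ} (hmT₀ : m ≤ T₀)
    (hT₀ : (m : ℝ) ^ 2 ≤ ε / 2 * T₀) : adiabaticTime P₀ P₁ π ε ≤ T₀ := by
  refine Nat.sInf_le fun T hT ν hν => ?_
  have hT' : (T₀ : ℝ) ≤ T := by exact_mod_cast hT
  have herr : (m : ℝ) * (m / T) ≤ ε / 2 := by
    rw [← mul_div_assoc, ← sq]
    exact div_le_of_le_mul₀ (Nat.cast_nonneg T) (by positivity) (by nlinarith)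
  linarith [tvDist_vecMul_adiabProd_le hP₀ hP₁ hmix (hmT₀.trans hT) (hν.vecMul hP₀)]

end AdiabaticProduct

theorem stmt_1_general {n : ℕ} (P₀ P₁ : Matrix (Fin n) (Fin n) ℝ)
    (hP₀ : IsStochastic P₀)
    (hP₁ : IsStochastic P₁) (hP₁i : MCIrreducible P₁) (hP₁a : MCAperiodic P₁)
    (π₁ : Fin n → ℝ) (hπ₁ : IsProbVec π₁) (hπ₁stat : π₁ ᵥ* P₁ = π₁) :
    ∃ C : ℝ, 0 < C ∧ ∀ ε : ℝ, 0 < ε → ε < 1 →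
      (adiabaticTime P₀ P₁ π₁ ε : ℝ) ≤ C * (mixingTime P₁ π₁ (ε / 2) : ℝ) ^ 2 / ε := by
  rw [isStochastic_iff_mem_rowStochastic] at hP₀ hP₁
  refine ⟨4, four_pos, fun ε hε₀ hε₁ => ?_⟩
  set m := mixingTime P₁ π₁ (ε / 2)
  set c := ⌈ε⁻¹⌉₊
  have hc₁ : 1 ≤ ε * c := (inv_le_iff_one_le_mul₀' hε₀).1 (Nat.le_ceil _)
  have hc₂ : (c : ℝ) ≤ 2 * ε⁻¹ := Nat.ceil_le_two_mul (inv_anti₀ hε₀ (by linarith))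
  have hmix := fun ν (hν : IsProbVec ν) =>
    tvDist_vecMul_pow_mixingTime_le hP₁ hP₁i hP₁a hπ₁ hπ₁stat (half_pos hε₀) hν
  have hT₀ : adiabaticTime P₀ P₁ π₁ ε ≤ 2 * m ^ 2 * c := by
    refine adiabaticTime_le hP₀ hP₁ hε₀.le hmix ?_ ?_
    · have hc₀ : 0 < c := Nat.ceil_pos.2 (inv_pos.2 hε₀)
      nlinarith [Nat.le_self_pow two_ne_zero m]
    · push_cast
      nlinarith
  calc (adiabaticTime P₀ P₁ π₁ ε : ℝ) ≤ 2 * m ^ 2 * c := by exact_mod_cast hT₀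
    _ ≤ 2 * m ^ 2 * (2 * ε⁻¹) := by gcongr
    _ = 4 * m ^ 2 / ε := by ring

/-- There is a constant C > 0 (depending on P₀, P₁) such that for all
ε ∈ (0,1), `t_ad(P₀, P₁, ε) ≤ C · t_mix(P₁, ε/2)² / ε`. -/
theorem stmt_1 {n : ℕ} (hn : 1 ≤ n) (P₀ P₁ : Matrix (Fin n) (Fin n) ℝ)
    (hP₀ : IsStochastic P₀) (hP₀i : MCIrreducible P₀) (hP₀a : MCAperiodic P₀)
    (hP₁ : IsStochastic P₁) (hP₁i : MCIrreducible P₁) (hP₁a : MCAperiodic P₁)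
    (π₁ : Fin n → ℝ) (hπ₁ : IsProbVec π₁) (hπ₁stat : π₁ ᵥ* P₁ = π₁) :
    ∃ C : ℝ, 0 < C ∧ ∀ ε : ℝ, 0 < ε → ε < 1 →
      (adiabaticTime P₀ P₁ π₁ ε : ℝ) ≤ C * (mixingTime P₁ π₁ (ε / 2) : ℝ) ^ 2 / ε :=
  stmt_1_general P₀ P₁ hP₀ hP₁ hP₁i hP₁a π₁ hπ₁ hπ₁stat
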